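/- arXiv:1405.0860 — 5 statements merged into one kernel-verified Lean document; each statement's English description precedes it below -/
import Mathlib

section
/- Let s, t : ℕ → ℝ be sequences with s_n ≥ 0 and t_n ≥ 0 for all n. Then the sets {ξ ∈ ℓ²(ℕ, ℂ) : Σ_n e^{s_n} |ξ_n|² < ∞} and {ξ ∈ ℓ²(ℕ, ℂ) : Σ_n e^{t_n} |ξ_n|² < ∞} are equal if and only if sup_n |s_n − t_n| < ∞. -/
open scoped ENNReal

lemma sum_of_le_aux {s t : ℕ → ℝ} {C : ℝ} (h : ∀ n, t n ≤ s n + C)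
    (ξ : lp (fun _ : ℕ => ℂ) 2)
    (hsum : Summable fun n => Real.exp (s n) * ‖(ξ : ∀ _ : ℕ, ℂ) n‖ ^ 2) :
    Summable fun n => Real.exp (t n) * ‖(ξ : ∀ _ : ℕ, ℂ) n‖ ^ 2 := by
  refine Summable.of_nonneg_of_le (fun n => by positivity)
    (fun n => ?_) (hsum.mul_left (Real.exp C))
  have h1 : Real.exp (t n) ≤ Real.exp C * Real.exp (s n) := by
    rw [← Real.exp_add]
    exact Real.exp_le_exp.mpr (by linarith [h n])
  have h2 : (0:ℝ) ≤ ‖(ξ : ∀ _ : ℕ, ℂ) n‖ ^ 2 := by positivity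
  calc Real.exp (t n) * ‖(ξ : ∀ _ : ℕ, ℂ) n‖ ^ 2
      ≤ (Real.exp C * Real.exp (s n)) * ‖(ξ : ∀ _ : ℕ, ℂ) n‖ ^ 2 :=
        mul_le_mul_of_nonneg_right h1 h2
    _ = Real.exp C * (Real.exp (s n) * ‖(ξ : ∀ _ : ℕ, ℂ) n‖ ^ 2) := by ring

lemma key_aux (s t : ℕ → ℝ) (ht : ∀ n, 0 ≤ t n)
    (h : ∀ C : ℝ, ∃ n, C < s n - t n) :
    ∃ ξ : lp (fun _ : ℕ => ℂ) 2,
      (Summable fun n => Real.exp (t n) * ‖(ξ : ∀ _ : ℕ, ℂ) n‖ ^ 2) ∧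
      ¬ (Summable fun n => Real.exp (s n) * ‖(ξ : ∀ _ : ℕ, ℂ) n‖ ^ 2) := by
  set d : ℕ → ℝ := fun n => s n - t n with hd
  choose F hF using h
  let g : ℕ → ℕ := fun k => Nat.rec (F 0) (fun k gk => F (max ((k:ℝ)+1) (d gk))) k
  have hg0 : ∀ k, g (k+1) = F (max ((k:ℝ)+1) (d (g k))) := fun k => rfl
  have hg1 : ∀ k : ℕ, (k : ℝ) < d (g k) := by
    intro k
    cases k with
    | zero => have := hF 0; simp only [Nat.cast_zero]; exact this
    | succ k =>
      have := hF (max ((k:ℝ)+1) (d (g k)))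
      rw [hg0 k] at *
      push_cast
      exact lt_of_le_of_lt (le_max_left _ _) this
  have hg2 : StrictMono fun k => d (g k) := by
    apply strictMono_nat_of_lt_succ
    intro k
    have := hF (max ((k:ℝ)+1) (d (g k)))
    rw [hg0 k]
    exact lt_of_le_of_lt (le_max_right _ _) this
  have hginj : Function.Injective g := fun a b hab => hg2.injective (by rw [hab])
  set a : ℕ → ℝ := fun k => Real.sqrt (Real.exp (-(t (g k))) * (1/2)^k) with ha
  set f : ℕ → ℂ := Function.extend g (fun k => (a k : ℂ)) 0 with hfdef
  have hfg : ∀ k, f (g k) = (a k : ℂ) := fun k => hginj.extend_apply _ _ _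
  have hf0 : ∀ n ∉ Set.range g, f n = 0 := by
    intro n hn
    exact Function.extend_apply' _ _ _ (by simpa [Set.range] using hn)
  have hnorm : ∀ k, ‖f (g k)‖ ^ 2 = Real.exp (-(t (g k))) * (1/2)^k := by
    intro k
    rw [hfg, Complex.norm_real, Real.norm_eq_abs, abs_of_nonneg (Real.sqrt_nonneg _),
      Real.sq_sqrt (by positivity)]
  have hhalf : Summable fun k : ℕ => ((1:ℝ)/2)^k :=
    summable_geometric_of_lt_one (by norm_num) (by norm_num)
  have hmem : Memℓp f 2 := by
    apply memℓp_gen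
    have h2 : (2 : ℝ≥0∞).toReal = 2 := by norm_num
    rw [h2]
    have : (fun i => ‖f i‖ ^ (2:ℝ)) = fun i => ‖f i‖ ^ (2:ℕ) := by
      funext i; rw [← Real.rpow_natCast]; norm_num
    rw [this]
    refine (hginj.summable_iff (fun n hn => by rw [hf0 n hn]; simp)).mp ?_
    refine Summable.of_nonneg_of_le (fun k => ?_) (fun k => ?_) hhalf
    · show (0:ℝ) ≤ ‖f (g k)‖ ^ 2
      positivity
    show ‖f (g k)‖ ^ 2 ≤ _
    rw [hnorm k]
    have : Real.exp (-(t (g k))) ≤ 1 := Real.exp_le_one_iff.mpr (by linarith [ht (g k)])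
    nlinarith [pow_nonneg (by norm_num : (0:ℝ) ≤ 1/2) k]
  refine ⟨⟨f, hmem⟩, ?_, ?_⟩
  · have hcoe : ((⟨f, hmem⟩ : lp (fun _ : ℕ => ℂ) 2) : ∀ _ : ℕ, ℂ) = f := rfl
    rw [hcoe]
    refine (hginj.summable_iff (fun n hn => by rw [hf0 n hn]; simp)).mp ?_
    have : ((fun n => Real.exp (t n) * ‖f n‖ ^ 2) ∘ g) = fun k => ((1:ℝ)/2)^k := by
      funext k
      show Real.exp (t (g k)) * ‖f (g k)‖ ^ 2 = _
      rw [hnorm k, ← mul_assoc, ← Real.exp_add]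
      simp
    rw [this]
    exact hhalf
  · intro hsum
    have hcoe : ((⟨f, hmem⟩ : lp (fun _ : ℕ => ℂ) 2) : ∀ _ : ℕ, ℂ) = f := rfl
    rw [hcoe] at hsum
    have hsum2 : Summable ((fun n => Real.exp (s n) * ‖f n‖ ^ 2) ∘ g) :=
      hsum.comp_injective hginj
    have hbig : ∀ k : ℕ, (1:ℝ) ≤ ((fun n => Real.exp (s n) * ‖f n‖ ^ 2) ∘ g) k := by
      intro k
      show (1:ℝ) ≤ Real.exp (s (g k)) * ‖f (g k)‖ ^ 2
      rw [hnorm k, ← mul_assoc, ← Real.exp_add]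
      have h1 : (k:ℝ) ≤ s (g k) + -(t (g k)) := le_of_lt (hg1 k)
      have h2 : Real.exp (k:ℝ) ≤ Real.exp (s (g k) + -(t (g k))) := Real.exp_le_exp.mpr h1
      have h3 : Real.exp (k:ℝ) = Real.exp 1 ^ k := by
        rw [← Real.exp_nat_mul]; norm_num
      have h4 : (1:ℝ) ≤ (Real.exp 1 / 2) ^ k := by
        apply one_le_pow₀
        have := Real.add_one_le_exp (1:ℝ)
        linarith
      have h5 : (Real.exp 1 / 2) ^ k = Real.exp 1 ^ k * (1/2)^k := by
        rw [div_eq_mul_inv, mul_pow]; norm_num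
      calc (1:ℝ) ≤ (Real.exp 1 / 2) ^ k := h4
        _ = Real.exp (k:ℝ) * (1/2)^k := by rw [h5, h3]
        _ ≤ Real.exp (s (g k) + -(t (g k))) * (1/2)^k :=
            mul_le_mul_of_nonneg_right h2 (by positivity)
    have := hsum2.tendsto_atTop_zero
    have hlt := this.eventually (gt_mem_nhds (by norm_num : (0:ℝ) < 1))
    rcases hlt.exists with ⟨k, hk⟩
    exact absurd (hbig k) (not_le.mpr hk)

theorem domain_eq_iff_sup_diff_lt_infty
    (s t : ℕ → ℝ) (hs : ∀ n, 0 ≤ s n) (ht : ∀ n, 0 ≤ t n) :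
    {ξ : lp (fun _ : ℕ => ℂ) 2 | Summable fun n => Real.exp (s n) * ‖(ξ : ∀ _ : ℕ, ℂ) n‖ ^ 2}
      = {ξ : lp (fun _ : ℕ => ℂ) 2 |
          Summable fun n => Real.exp (t n) * ‖(ξ : ∀ _ : ℕ, ℂ) n‖ ^ 2}
    ↔ ∃ C : ℝ, ∀ n, |s n - t n| ≤ C := by
  constructor
  · intro heq
    by_contra hC
    push_neg at hC
    by_cases h1 : ∀ C : ℝ, ∃ n, C < s n - t n
    · obtain ⟨ξ, hξt, hξs⟩ := key_aux s t ht h1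
      have : ξ ∈ {ξ : lp (fun _ : ℕ => ℂ) 2 |
          Summable fun n => Real.exp (t n) * ‖(ξ : ∀ _ : ℕ, ℂ) n‖ ^ 2} := hξt
      rw [← heq] at this
      exact hξs this
    · push_neg at h1
      obtain ⟨C₁, hC₁⟩ := h1
      have h2 : ∀ C : ℝ, ∃ n, C < t n - s n := by
        intro C
        obtain ⟨n, hn⟩ := hC (max C C₁)
        refine ⟨n, ?_⟩
        rcases abs_cases (s n - t n) with ⟨heqd, _⟩ | ⟨heqd, _⟩
        · exact absurd (hC₁ n) (not_le.mpr (heqd ▸ lt_of_le_of_lt (le_max_right _ _) hn))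
        · have : max C C₁ < -(s n - t n) := heqd ▸ hn
          have := lt_of_le_of_lt (le_max_left C C₁) this
          linarith
      obtain ⟨ξ, hξs, hξt⟩ := key_aux t s hs h2
      have : ξ ∈ {ξ : lp (fun _ : ℕ => ℂ) 2 |
          Summable fun n => Real.exp (s n) * ‖(ξ : ∀ _ : ℕ, ℂ) n‖ ^ 2} := hξs
      rw [heq] at this
      exact hξt this
  · rintro ⟨C, hC⟩
    ext ξ
    simp only [Set.mem_setOf_eq]
    constructor
    · exact sum_of_le_aux (fun n => by have := abs_le.mp (hC n); linarith) ξ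
    · exact sum_of_le_aux (fun n => by have := abs_le.mp (hC n); linarith) ξ
end

section
/- For all x, y ∈ ℝ^ℕ, sup_n |x_n − y_n| < ∞ if and only if {ξ ∈ ℓ²(ℕ, ℂ) : Σ_n e^{x̃_n} |ξ_n|² < ∞} = {ξ ∈ ℓ²(ℕ, ℂ) : Σ_n e^{ỹ_n} |ξ_n|² < ∞}. (This exhibits a continuous injective reduction of the equivalence relation E_{ℓ∞} to equality of domains of diagonal self-adjoint operators.) -/
/-- The "tilde" map: for `x : ℕ → ℝ` (indices starting from 0), the pair
`(x̃_{2n}, x̃_{2n+1})` equals `(x_n, 0)` if `x_n ≥ 0` and `(0, -x_n)` if `x_n < 0`. -/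
noncomputable def tildeMap (x : ℕ → ℝ) : ℕ → ℝ := fun k =>
  if k % 2 = 0 then (if 0 ≤ x (k / 2) then x (k / 2) else 0)
  else (if 0 ≤ x (k / 2) then 0 else -x (k / 2))

lemma tildeMap_nonneg (x : ℕ → ℝ) (k : ℕ) : 0 ≤ tildeMap x k := by
  unfold tildeMap
  split_ifs <;> linarith

lemma tildeMap_sub (x : ℕ → ℝ) (n : ℕ) :
    x n = tildeMap x (2 * n) - tildeMap x (2 * n + 1) := by
  have h1 : (2 * n) % 2 = 0 := by omega
  have h2 : (2 * n) / 2 = n := by omega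
  have h3 : (2 * n + 1) % 2 = 1 := by omega
  have h4 : (2 * n + 1) / 2 = n := by omega
  unfold tildeMap
  rw [h1, h2, h3, h4]
  norm_num
  split_ifs <;> ring

lemma tildeMap_diff_le {x y : ℕ → ℝ} {C : ℝ} (hC : ∀ n, |x n - y n| ≤ C) (k : ℕ) :
    |tildeMap x k - tildeMap y k| ≤ C := by
  have h := abs_le.mp (hC (k / 2))
  unfold tildeMap
  rw [abs_le]
  split_ifs <;> constructor <;> linarith

lemma summable_exp_mul_of_le {a b : ℕ → ℝ} {C : ℝ} (hab : ∀ n, a n ≤ b n + C)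
    (g : ℕ → ℝ) (hg : ∀ n, 0 ≤ g n)
    (h : Summable fun n => Real.exp (b n) * g n) :
    Summable fun n => Real.exp (a n) * g n := by
  apply Summable.of_nonneg_of_le (fun n => mul_nonneg (Real.exp_pos _).le (hg n)) (fun n => ?_)
    (h.mul_left (Real.exp C))
  rw [← mul_assoc, ← Real.exp_add]
  exact mul_le_mul_of_nonneg_right (Real.exp_le_exp.mpr (by linarith [hab n])) (hg n)

/-- Key: if the tilde difference is unbounded above, we can construct `ξ` in the
`y`-domain but not the `x`-domain. -/
lemma key_lemma (x y : ℕ → ℝ) (h : ∀ C : ℝ, ∃ m, C < tildeMap x m - tildeMap y m) :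
    ∃ ξ : lp (fun _ : ℕ => ℂ) 2,
      Summable (fun n => Real.exp (tildeMap y n) * ‖(ξ : ∀ _ : ℕ, ℂ) n‖ ^ 2) ∧
      ¬ Summable (fun n => Real.exp (tildeMap x n) * ‖(ξ : ∀ _ : ℕ, ℂ) n‖ ^ 2) := by
  classical
  set d : ℕ → ℝ := fun m => tildeMap x m - tildeMap y m with hd
  -- we can find indices beyond any bound
  have h2 : ∀ (N : ℕ) (C : ℝ), ∃ m, N < m ∧ C < d m := by
    intro N C
    obtain ⟨m, hm⟩ := h (max C ((Finset.range (N + 1)).sup' ⟨0, by simp⟩ d))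
    refine ⟨m, ?_, lt_of_le_of_lt (le_max_left _ _) hm⟩
    by_contra hle
    push_neg at hle
    exact absurd (Finset.le_sup' d (Finset.mem_range.mpr (Nat.lt_succ_of_le hle)))
      (not_le.mpr (lt_of_le_of_lt (le_max_right _ _) hm))
  -- construct a strictly increasing sequence with large d-values
  let k : ℕ → ℕ := fun j =>
    Nat.rec (h2 0 (2 * (0 : ℝ) + 2)).choose
      (fun j ih => (h2 ih (2 * ((j : ℝ) + 1) + 2)).choose) j
  have hk_succ : ∀ j, k j < k (j + 1) := fun j => (h2 (k j) _).choose_spec.1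
  have hk_mono : StrictMono k := strictMono_nat_of_lt_succ hk_succ
  have hk0 : k 0 = (h2 0 (2 * (0 : ℝ) + 2)).choose := rfl
  have hkS : ∀ j, k (j + 1) = (h2 (k j) (2 * ((j : ℝ) + 1) + 2)).choose := fun _ => rfl
  have hkd : ∀ j : ℕ, 2 * (j : ℝ) + 2 < d (k j) := by
    intro j
    cases j with
    | zero =>
      rw [hk0]
      simpa using (h2 0 (2 * (0 : ℝ) + 2)).choose_spec.2
    | succ j =>
      rw [hkS j]
      have h' := (h2 (k j) (2 * ((j : ℝ) + 1) + 2)).choose_spec.2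
      push_cast
      linarith
  clear hk0 hkS
  clear_value k
  clear h2
  clear_value d
  -- the vector
  let f : ℕ → ℂ := fun m =>
    if m ∈ Set.range k then ((Real.exp (-(tildeMap x m + tildeMap y m) / 4) : ℝ) : ℂ) else 0
  have hnorm : ∀ m, ‖f m‖ ^ 2 =
      if m ∈ Set.range k then Real.exp (-(tildeMap x m + tildeMap y m) / 2) else 0 := by
    intro m
    by_cases hm : m ∈ Set.range k
    · simp only [f, hm, if_true, Complex.norm_real, Real.norm_eq_abs,
        abs_of_pos (Real.exp_pos _)]
      rw [← Real.exp_nat_mul]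
      norm_num
      ring_nf
    · show ‖(if m ∈ Set.range k then ((Real.exp (-(tildeMap x m + tildeMap y m) / 4) : ℝ) : ℂ) else 0)‖ ^ 2 = _
      rw [if_neg hm, if_neg hm]
      simp
  -- the two relevant series
  have hFy : ∀ m, Real.exp (tildeMap y m) * ‖f m‖ ^ 2 =
      if m ∈ Set.range k then Real.exp (-(d m) / 2) else 0 := by
    intro m
    rw [hnorm m]
    by_cases hm : m ∈ Set.range k
    · simp only [hm, if_true, ← Real.exp_add, hd]
      ring_nf
    · rw [if_neg hm, if_neg hm, mul_zero]
  have hFx : ∀ m, Real.exp (tildeMap x m) * ‖f m‖ ^ 2 =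
      if m ∈ Set.range k then Real.exp (d m / 2) else 0 := by
    intro m
    rw [hnorm m]
    by_cases hm : m ∈ Set.range k
    · simp only [hm, if_true, ← Real.exp_add, hd]
      ring_nf
    · rw [if_neg hm, if_neg hm, mul_zero]
  -- summability on the y side
  have hysum : Summable fun m => Real.exp (tildeMap y m) * ‖f m‖ ^ 2 := by
    have hvan : ∀ m ∉ Set.range k,
        (fun m => Real.exp (tildeMap y m) * ‖f m‖ ^ 2) m = 0 := by
      intro m hm
      show Real.exp (tildeMap y m) * ‖f m‖ ^ 2 = 0
      rw [hFy m, if_neg hm]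
    rw [← hk_mono.injective.summable_iff hvan]
    apply Summable.of_nonneg_of_le (f := fun j => Real.exp (-1 : ℝ) ^ j)
      (fun j => by
        simp only [Function.comp_apply]
        exact mul_nonneg (Real.exp_pos _).le (by positivity))
      (fun j => ?_)
      (summable_geometric_of_lt_one (Real.exp_nonneg _) (by
        rw [Real.exp_lt_one_iff]; norm_num))
    show Real.exp (tildeMap y (k j)) * ‖f (k j)‖ ^ 2 ≤ Real.exp (-1 : ℝ) ^ j
    rw [hFy (k j), if_pos (Set.mem_range_self j), ← Real.exp_nat_mul]
    apply Real.exp_le_exp.mpr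
    have hj1 := hkd j
    have hj2 : (0 : ℝ) ≤ (j : ℝ) := Nat.cast_nonneg j
    nlinarith
  -- non-summability on the x side
  have hxsum : ¬ Summable fun m => Real.exp (tildeMap x m) * ‖f m‖ ^ 2 := by
    intro hs
    have hvan : ∀ m ∉ Set.range k,
        (fun m => Real.exp (tildeMap x m) * ‖f m‖ ^ 2) m = 0 := by
      intro m hm
      show Real.exp (tildeMap x m) * ‖f m‖ ^ 2 = 0
      rw [hFx m, if_neg hm]
    have hcomp : Summable ((fun m => Real.exp (tildeMap x m) * ‖f m‖ ^ 2) ∘ k) :=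
      (hk_mono.injective.summable_iff hvan).mpr hs
    have htend := hcomp.tendsto_atTop_zero
    have hev := htend.eventually_lt_const (by norm_num : (0 : ℝ) < 1)
    obtain ⟨j, hj⟩ := hev.exists
    have : Real.exp (tildeMap x (k j)) * ‖f (k j)‖ ^ 2 = Real.exp (d (k j) / 2) := by
      rw [hFx (k j), if_pos (Set.mem_range_self j)]
    rw [Function.comp_apply, this] at hj
    have h1 : (1 : ℝ) ≤ Real.exp (d (k j) / 2) := by
      apply Real.one_le_exp
      have hj1 := hkd j
      have hj2 : (0 : ℝ) ≤ (j : ℝ) := Nat.cast_nonneg j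
      linarith
    linarith
  -- f is in ℓ²
  have hmem : Memℓp f 2 := by
    apply memℓp_gen
    have : (2 : ENNReal).toReal = ((2 : ℕ) : ℝ) := by norm_num
    rw [this]
    simp_rw [Real.rpow_natCast]
    apply Summable.of_nonneg_of_le (fun m => by positivity) (fun m => ?_) hysum
    have h1 : (1 : ℝ) ≤ Real.exp (tildeMap y m) := Real.one_le_exp (tildeMap_nonneg y m)
    nlinarith [sq_nonneg ‖f m‖, norm_nonneg (f m)]
  refine ⟨⟨f, hmem⟩, ?_, ?_⟩
  · exact hysum
  · exact hxsum

theorem bounded_difference_iff_tilde_domains_eq (x y : ℕ → ℝ) :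
    (∃ C : ℝ, ∀ n, |x n - y n| ≤ C) ↔
      {ξ : lp (fun _ : ℕ => ℂ) 2 |
          Summable fun n => Real.exp (tildeMap x n) * ‖(ξ : ∀ _ : ℕ, ℂ) n‖ ^ 2}
        = {ξ : lp (fun _ : ℕ => ℂ) 2 |
            Summable fun n => Real.exp (tildeMap y n) * ‖(ξ : ∀ _ : ℕ, ℂ) n‖ ^ 2} := by
  constructor
  · rintro ⟨C, hC⟩
    ext ξ
    simp only [Set.mem_setOf_eq]
    constructor
    · intro hsum
      refine summable_exp_mul_of_le (C := C) (fun k => ?_) _ (fun n => by positivity) hsum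
      have := abs_le.mp (tildeMap_diff_le hC k)
      linarith [this.1, this.2]
    · intro hsum
      refine summable_exp_mul_of_le (C := C) (fun k => ?_) _ (fun n => by positivity) hsum
      have := abs_le.mp (tildeMap_diff_le hC k)
      linarith [this.1, this.2]
  · intro hset
    by_contra hnb
    push_neg at hnb
    -- the tilde difference is unbounded in absolute value
    have htilde : ∀ C : ℝ, ∃ k, C < |tildeMap x k - tildeMap y k| := by
      intro C
      obtain ⟨n, hn⟩ := hnb (2 * max C 0)
      by_contra hk
      push_neg at hk
      have ha := hk (2 * n)
      have hb := hk (2 * n + 1)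
      have hxy : x n - y n = (tildeMap x (2 * n) - tildeMap y (2 * n)) -
          (tildeMap x (2 * n + 1) - tildeMap y (2 * n + 1)) := by
        rw [tildeMap_sub x n, tildeMap_sub y n]; ring
      have hCle : C ≤ max C 0 := le_max_left _ _
      have h0le : (0 : ℝ) ≤ max C 0 := le_max_right _ _
      have h1 := abs_le.mp (le_trans ha hCle)
      have h2 := abs_le.mp (le_trans hb hCle)
      have : |x n - y n| ≤ 2 * max C 0 := by
        rw [hxy, abs_le]
        constructor <;> linarith [h1.1, h1.2, h2.1, h2.2]
      linarith
    -- so it is unbounded above in one of the two directions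
    have hdir : (∀ C : ℝ, ∃ k, C < tildeMap x k - tildeMap y k) ∨
        (∀ C : ℝ, ∃ k, C < tildeMap y k - tildeMap x k) := by
      by_contra hcon
      push_neg at hcon
      obtain ⟨⟨C1, hC1⟩, ⟨C2, hC2⟩⟩ := hcon
      obtain ⟨k, hk⟩ := htilde (max C1 C2)
      have h1 := hC1 k
      have h2 := hC2 k
      rcases abs_cases (tildeMap x k - tildeMap y k) with ⟨heq, _⟩ | ⟨heq, _⟩ <;>
        rw [heq] at hk
      · exact absurd h1 (not_le.mpr (lt_of_le_of_lt (le_max_left _ _) hk))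
      · have : max C1 C2 < tildeMap y k - tildeMap x k := by linarith
        exact absurd h2 (not_le.mpr (lt_of_le_of_lt (le_max_right _ _) this))
    rcases hdir with hdir | hdir
    · obtain ⟨ξ, hy, hx⟩ := key_lemma x y hdir
      have : ξ ∈ {ξ : lp (fun _ : ℕ => ℂ) 2 |
          Summable fun n => Real.exp (tildeMap x n) * ‖(ξ : ∀ _ : ℕ, ℂ) n‖ ^ 2} := by
        rw [hset]; exact hy
      exact hx this
    · obtain ⟨ξ, hy, hx⟩ := key_lemma y x hdir
      have : ξ ∈ {ξ : lp (fun _ : ℕ => ℂ) 2 |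
          Summable fun n => Real.exp (tildeMap y n) * ‖(ξ : ∀ _ : ℕ, ℂ) n‖ ^ 2} := by
        rw [← hset]; exact hy
      exact hx this
end

section
/- (Rosendal) Every K_σ equivalence relation on a Polish space is Borel reducible to E_{ℓ∞}: if X is a Polish space and E is an equivalence relation on X such that {(x, y) ∈ X × X : x E y} is σ-compact, then there exists a Borel map f : X → ℝ^ℕ such that for all x, y ∈ X, x E y if and only if sup_n |f(x)_n − f(y)_n| < ∞. -/
/-!
Write `E` as an increasing union of compact symmetric relations `Lₙ` with `Lₙ ○ Lₙ ⊆ Lₙ₊₁`.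
For a closed set `V` and a cap `N`, let `d(x)` be the least `k ≤ N` such that `x` is `L_k`-related
to a point of `V` (or `N` if there is none); its sublevel sets are compact, so `d` is Borel.
If `x Lₘ y` then `|d(x) - d(y)| ≤ m + 1`, so `E`-related points have uniformly close coordinates.
If `x` and `y` are not `E`-related and `x Lₘ x`, then `x` avoids the compact section `L_N[y]`, so
a closed set `V` from a fixed countable family contains `x` and misses `L_N[y]`; for it `d(x) ≤ m`
while `d(y) = N`, and `N` is arbitrary.
-/

open Set SetRel Topology TopologicalSpace

section Compactness

variable {α β γ : Type*} [TopologicalSpace α] [TopologicalSpace β] [TopologicalSpace γ]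

lemma IsCompact.setRelComp [T2Space β] {R : SetRel α β} {S : SetRel β γ}
    (hR : IsCompact R) (hS : IsCompact S) : IsCompact (R ○ S) := by
  have : R ○ S = (fun q : (α × β) × (β × γ) => (q.1.1, q.2.2)) ''
      ((R ×ˢ S) ∩ {q | q.1.2 = q.2.1}) := by
    ext ⟨a, c⟩
    simp
  rw [this]
  exact ((hR.prod hS).inter_right (isClosed_eq (by fun_prop) (by fun_prop))).image (by fun_prop)

lemma IsCompact.setRelInv {R : SetRel α β} (hR : IsCompact R) : IsCompact R.inv := by
  simpa only [SetRel.inv, image_swap_eq_preimage_swap] using hR.image continuous_swap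

lemma IsCompact.setRelImage {R : SetRel α β} {s : Set α} (hR : IsCompact R) (hs : IsClosed s) :
    IsCompact (R.image s) := by
  have : R.image s = Prod.snd '' (R ∩ s ×ˢ univ) := by
    ext b
    simp [and_comm]
  rw [this]
  exact (hR.inter_right (hs.prod isClosed_univ)).image continuous_snd

lemma IsCompact.setRelPreimage {R : SetRel α β} {t : Set β} (hR : IsCompact R) (ht : IsClosed t) :
    IsCompact (R.preimage t) :=
  R.image_inv t ▸ hR.setRelInv.setRelImage ht

end Compactness

namespace SetRel

variable {α : Type*} {R₁ R₂ R : SetRel α α}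

instance isSymm_union [R₁.IsSymm] [R₂.IsSymm] : (R₁ ∪ R₂).IsSymm where
  symm _ _ := Or.imp R₁.symm R₂.symm

instance isSymm_union_inv : (R ∪ R.inv).IsSymm where
  symm _ _ := Or.symm

end SetRel

section AccumulateComp

variable {X : Type*}

def accumulateComp (K : ℕ → SetRel X X) : ℕ → SetRel X X
  | 0 => K 0
  | n + 1 => accumulateComp K n ∪ (accumulateComp K n ○ accumulateComp K n) ∪ K (n + 1)

lemma accumulateComp_succ (K : ℕ → SetRel X X) (n : ℕ) :
    accumulateComp K (n + 1) =
      accumulateComp K n ∪ (accumulateComp K n ○ accumulateComp K n) ∪ K (n + 1) :=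
  rfl

lemma monotone_accumulateComp (K : ℕ → SetRel X X) : Monotone (accumulateComp K) :=
  monotone_nat_of_le_succ fun n => by
    rw [accumulateComp_succ]
    exact subset_union_left.trans subset_union_left

lemma accumulateComp_comp_subset_succ (K : ℕ → SetRel X X) (n : ℕ) :
    accumulateComp K n ○ accumulateComp K n ⊆ accumulateComp K (n + 1) := by
  rw [accumulateComp_succ]
  exact subset_union_right.trans subset_union_left

lemma subset_accumulateComp (K : ℕ → SetRel X X) : ∀ n, K n ⊆ accumulateComp K n
  | 0 => subset_rfl
  | n + 1 => by
    rw [accumulateComp_succ]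
    exact subset_union_right

variable {K : ℕ → SetRel X X}

lemma isSymm_accumulateComp (hK : ∀ n, (K n).IsSymm) : ∀ n, (accumulateComp K n).IsSymm
  | 0 => hK 0
  | n + 1 => by
    have := isSymm_accumulateComp hK n
    have := hK (n + 1)
    rw [accumulateComp_succ]
    infer_instance

lemma accumulateComp_subset {E : SetRel X X} [E.IsTrans] (hKE : ∀ n, K n ⊆ E) :
    ∀ n, accumulateComp K n ⊆ E
  | 0 => hKE 0
  | n + 1 => by
    have ih := accumulateComp_subset hKE n
    rw [accumulateComp_succ]
    exact union_subset (union_subset ih ((comp_subset_comp ih ih).trans comp_subset_self)) (hKE _)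

lemma isCompact_accumulateComp [TopologicalSpace X] [T2Space X] (hK : ∀ n, IsCompact (K n)) :
    ∀ n, IsCompact (accumulateComp K n)
  | 0 => hK 0
  | n + 1 => by
    have ih := isCompact_accumulateComp hK n
    rw [accumulateComp_succ]
    exact (ih.union (ih.setRelComp ih)).union (hK (n + 1))

end AccumulateComp

structure CompactRelExhaustion (X : Type*) [TopologicalSpace X] (E : SetRel X X) where
  rel : ℕ → SetRel X X
  isCompact_rel : ∀ n, IsCompact (rel n)
  monotone_rel : Monotone rel
  isSymm_rel : ∀ n, (rel n).IsSymm
  comp_subset_rel_succ : ∀ n, rel n ○ rel n ⊆ rel (n + 1)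
  iUnion_rel : ⋃ n, rel n = E

lemma IsSigmaCompact.nonempty_compactRelExhaustion {X : Type*} [TopologicalSpace X] [T2Space X]
    {E : SetRel X X} [E.IsSymm] [E.IsTrans] (hE : IsSigmaCompact E) :
    Nonempty (CompactRelExhaustion X E) := by
  obtain ⟨K, hKc, hKE⟩ := hE
  have hK_subset (n : ℕ) : K n ⊆ E := hKE ▸ subset_iUnion K n
  set K' : ℕ → SetRel X X := fun n => K n ∪ SetRel.inv (K n)
  refine ⟨⟨accumulateComp K',
    isCompact_accumulateComp fun n => (hKc n).union (hKc n).setRelInv, monotone_accumulateComp K',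
    isSymm_accumulateComp fun _ => SetRel.isSymm_union_inv, accumulateComp_comp_subset_succ K', ?_⟩⟩
  have hK'E (n : ℕ) : K' n ⊆ E :=
    union_subset (hK_subset n) (E.inv_eq_self ▸ inv_mono (hK_subset n))
  refine (iUnion_subset (accumulateComp_subset hK'E)).antisymm ?_
  rw [← hKE]
  exact iUnion_mono fun n => subset_union_left.trans (subset_accumulateComp K' n)

section TruncHitting

variable {X : Type*}

open scoped Classical

noncomputable def truncHitting (A : ℕ → Set X) (N : ℕ) (x : X) : ℕ :=
  Nat.find (⟨N, Or.inr le_rfl⟩ : ∃ k, x ∈ A k ∨ N ≤ k)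

variable {A : ℕ → Set X} {N k : ℕ} {x : X}

lemma truncHitting_le : truncHitting A N x ≤ N :=
  Nat.find_min' _ (Or.inr le_rfl)

lemma truncHitting_le_of_mem (h : x ∈ A k) : truncHitting A N x ≤ k :=
  Nat.find_min' _ (Or.inl h)

lemma mem_or_le_truncHitting : x ∈ A (truncHitting A N x) ∨ N ≤ truncHitting A N x :=
  Nat.find_spec (⟨N, Or.inr le_rfl⟩ : ∃ k, x ∈ A k ∨ N ≤ k)

lemma truncHitting_eq_of_notMem (h : ∀ k < N, x ∉ A k) : truncHitting A N x = N := by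
  by_contra hne
  have hlt : truncHitting A N x < N := truncHitting_le.lt_of_ne hne
  exact h _ hlt (mem_or_le_truncHitting.resolve_right hlt.not_ge)

lemma measurable_truncHitting [MeasurableSpace X] (hA : ∀ k, MeasurableSet (A k)) (N : ℕ) :
    Measurable (truncHitting A N) :=
  measurable_find _ fun k => (hA k).union (MeasurableSet.const _)

end TruncHitting

lemma exists_seq_isClosed_nhds_basis (X : Type*) [TopologicalSpace X] [SecondCountableTopology X]
    [RegularSpace X] :
    ∃ B : ℕ → Set X, (∀ n, IsClosed (B n)) ∧ ∀ x, ∀ s ∈ 𝓝 x, ∃ n, x ∈ B n ∧ B n ⊆ s := by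
  have hcount : (insert ∅ (closure '' countableBasis X)).Countable :=
    ((countable_countableBasis X).image _).insert ∅
  obtain ⟨B, hB⟩ := hcount.exists_eq_range (insert_nonempty _ _)
  refine ⟨B, fun n => ?_, fun x s hs => ?_⟩
  · have : B n ∈ insert ∅ (closure '' countableBasis X) := hB ▸ mem_range_self n
    rcases this with h | ⟨t, -, ht⟩
    · exact h ▸ isClosed_empty
    · exact ht ▸ isClosed_closure
  · obtain ⟨t, ht, hxt, hts⟩ := (isBasis_countableBasis X).exists_closure_subset hs
    obtain ⟨n, hn⟩ : closure t ∈ range B := hB ▸ mem_insert_of_mem _ (mem_image_of_mem _ ht)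
    exact ⟨n, hn ▸ subset_closure hxt, hn ▸ hts⟩

namespace CompactRelExhaustion

variable {X : Type*} [TopologicalSpace X] {E : SetRel X X} (L : CompactRelExhaustion X E)
  {V : Set X} {N m : ℕ} {x y : X}

noncomputable def truncDist (V : Set X) (N : ℕ) : X → ℕ :=
  truncHitting (fun k => (L.rel k).preimage V) N

lemma truncDist_le_of_mem {v : X} (hv : v ∈ V) (h : (x, v) ∈ L.rel m) : L.truncDist V N x ≤ m :=
  truncHitting_le_of_mem ⟨v, hv, h⟩

lemma truncDist_le : L.truncDist V N x ≤ N :=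
  truncHitting_le

lemma mem_preimage_or_le_truncDist :
    x ∈ (L.rel (L.truncDist V N x)).preimage V ∨ N ≤ L.truncDist V N x :=
  mem_or_le_truncHitting (A := fun k => (L.rel k).preimage V)

lemma truncDist_le_add (h : (x, y) ∈ L.rel m) : L.truncDist V N x ≤ L.truncDist V N y + m + 1 := by
  set j := L.truncDist V N y
  rcases L.mem_preimage_or_le_truncDist (V := V) (N := N) (x := y) with ⟨v, hv, hyv⟩ | hN
  · have hxv : (x, v) ∈ L.rel (max m j + 1) := L.comp_subset_rel_succ _
      ⟨y, L.monotone_rel (le_max_left m j) h, L.monotone_rel (le_max_right m j) hyv⟩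
    exact (L.truncDist_le_of_mem hv hxv).trans (by omega)
  · exact (L.truncDist_le (V := V)).trans (by omega)

lemma abs_truncDist_sub_le (h : (x, y) ∈ L.rel m) :
    |(L.truncDist V N x : ℝ) - L.truncDist V N y| ≤ m + 1 := by
  have hyx : (y, x) ∈ L.rel m := (L.isSymm_rel m).symm _ _ h
  have h₁ : (L.truncDist V N x : ℝ) ≤ L.truncDist V N y + m + 1 := by
    exact_mod_cast L.truncDist_le_add h
  have h₂ : (L.truncDist V N y : ℝ) ≤ L.truncDist V N x + m + 1 := by
    exact_mod_cast L.truncDist_le_add hyx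
  rw [abs_sub_le_iff]
  constructor <;> linarith

lemma truncDist_eq_of_disjoint (h : Disjoint V ((L.rel N).image {y})) : L.truncDist V N y = N :=
  truncHitting_eq_of_notMem fun _ hk ⟨_, hv, hyv⟩ =>
    disjoint_left.1 h hv ⟨y, rfl, L.monotone_rel hk.le hyv⟩

lemma measurable_truncDist [MeasurableSpace X] [OpensMeasurableSpace X] [T2Space X]
    (hV : IsClosed V) (N : ℕ) : Measurable (L.truncDist V N) :=
  measurable_truncHitting (fun k => ((L.isCompact_rel k).setRelPreimage hV).measurableSet) N

end CompactRelExhaustion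

theorem CompactRelExhaustion.exists_measurable_reduction {X : Type*} [TopologicalSpace X]
    [T3Space X] [SecondCountableTopology X] [MeasurableSpace X] [OpensMeasurableSpace X]
    {E : SetRel X X} [E.IsRefl] (L : CompactRelExhaustion X E) :
    ∃ f : X → ℕ → ℝ, Measurable f ∧ ∀ x y, (x, y) ∈ E ↔ ∃ C : ℝ, ∀ n, |f x n - f y n| ≤ C := by
  obtain ⟨B, hB_closed, hB_basis⟩ := exists_seq_isClosed_nhds_basis X
  refine ⟨fun x n => L.truncDist (B n.unpair.1) n.unpair.2 x,
    measurable_pi_lambda _ fun _ =>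
      measurable_from_top.comp (L.measurable_truncDist (hB_closed _) _),
    fun x y => ⟨fun hxy => ?_, fun ⟨C, hC⟩ => ?_⟩⟩
  · obtain ⟨m, hm⟩ := mem_iUnion.1 (L.iUnion_rel ▸ hxy)
    exact ⟨m + 1, fun n => L.abs_truncDist_sub_le hm⟩
  · by_contra hxy
    obtain ⟨m, hm⟩ := mem_iUnion.1 (L.iUnion_rel.symm ▸ E.refl x)
    set N := m + ⌈C⌉₊ + 1
    have hxS : x ∉ (L.rel N).image {y} := fun ⟨_, rfl, hyx⟩ =>
      hxy (L.iUnion_rel ▸ mem_iUnion_of_mem N ((L.isSymm_rel N).symm _ _ hyx))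
    obtain ⟨i, hxi, hiS⟩ := hB_basis x _
      (((L.isCompact_rel N).setRelImage isClosed_singleton).isClosed.compl_mem_nhds hxS)
    have hx : L.truncDist (B i) N x ≤ m := L.truncDist_le_of_mem hxi hm
    have hy : L.truncDist (B i) N y = N :=
      L.truncDist_eq_of_disjoint (disjoint_compl_left.mono_left hiS)
    have hCn := hC (Nat.pair i N)
    simp only [Nat.unpair_pair, hy] at hCn
    have hx' : (L.truncDist (B i) N x : ℝ) ≤ m := by exact_mod_cast hx
    have hN : (N : ℝ) = m + ⌈C⌉₊ + 1 := by push_cast [N]; ring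
    linarith [(abs_sub_le_iff.1 hCn).2, Nat.le_ceil C]

/-- Rosendal: every `K_σ` equivalence relation on a Polish space is Borel reducible
to `E_{ℓ∞}` on `ℝ^ℕ`. -/
theorem ksigma_equivalence_borel_reducible_to_ell_infty
    {X : Type*} [TopologicalSpace X] [PolishSpace X]
    [MeasurableSpace X] [BorelSpace X]
    (E : X → X → Prop) (hE : Equivalence E)
    (hK : IsSigmaCompact {p : X × X | E p.1 p.2}) :
    ∃ f : X → (ℕ → ℝ), Measurable f ∧
      ∀ x y, E x y ↔ ∃ C : ℝ, ∀ n, |f x n - f y n| ≤ C := by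
  have : SetRel.IsRefl {p : X × X | E p.1 p.2} := ⟨hE.refl⟩
  have : SetRel.IsSymm {p : X × X | E p.1 p.2} := ⟨fun _ _ => hE.symm⟩
  have : SetRel.IsTrans {p : X × X | E p.1 p.2} := ⟨fun _ _ _ => hE.trans⟩
  obtain ⟨L⟩ := hK.nonempty_compactRelExhaustion
  exact L.exists_measurable_reduction
end

section
/- E₁ is Borel reducible to E_{ℓ∞}: there exists a Borel map f : C^ℕ → ℝ^ℕ such that for all a, b ∈ C^ℕ, a E₁ b if and only if sup_n |f(a)_n − f(b)_n| < ∞. -/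
/-- `E₁`: tail equality on `C^ℕ`, where `C = 2^ℕ` is the Cantor space. -/
def E1 (a b : ℕ → ℕ → Bool) : Prop := ∃ N, ∀ n ≥ N, a n = b n

theorem E1_borel_reducible_to_ell_infty :
    ∃ f : (ℕ → ℕ → Bool) → (ℕ → ℝ), Measurable f ∧
      ∀ a b, E1 a b ↔ ∃ C : ℝ, ∀ n, |f a n - f b n| ≤ C := by
  refine ⟨fun a m => if a m.unpair.1 m.unpair.2 then (m.unpair.1 : ℝ) else 0, ?_, ?_⟩
  · rw [measurable_pi_iff]
    intro m
    apply Measurable.ite _ measurable_const measurable_const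
    have h : Measurable fun a : ℕ → ℕ → Bool => a m.unpair.1 m.unpair.2 :=
      (measurable_pi_apply m.unpair.2).comp (measurable_pi_apply m.unpair.1)
    exact h (MeasurableSet.singleton true)
  · intro a b
    constructor
    · rintro ⟨N, hN⟩
      refine ⟨2 * N, fun m => ?_⟩
      dsimp only
      by_cases h : N ≤ m.unpair.1
      · rw [hN m.unpair.1 h]
        simp
      · push_neg at h
        have h1 : |(if a m.unpair.1 m.unpair.2 then (m.unpair.1 : ℝ) else 0)| ≤ m.unpair.1 := by
          split <;> simp
        have h2 : |(if b m.unpair.1 m.unpair.2 then (m.unpair.1 : ℝ) else 0)| ≤ m.unpair.1 := by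
          split <;> simp
        have hm : (m.unpair.1 : ℝ) ≤ N := by exact_mod_cast h.le
        calc _ ≤ _ := abs_sub _ _
          _ ≤ (N : ℝ) + N := add_le_add (h1.trans hm) (h2.trans hm)
          _ = 2 * N := by ring
    · rintro ⟨C, hC⟩
      refine ⟨⌈C⌉₊ + 1, fun n hn => funext fun k => ?_⟩
      by_contra hne
      have := hC (Nat.pair n k)
      dsimp only at this
      rw [Nat.unpair_pair] at this
      have hCn : C < (n : ℝ) := by
        calc C ≤ (⌈C⌉₊ : ℝ) := Nat.le_ceil C
          _ < (n : ℝ) := by exact_mod_cast Nat.lt_of_lt_of_le (Nat.lt_succ_self _) hn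
      rcases Bool.eq_false_or_eq_true (a n k) with ha | ha <;>
        rcases Bool.eq_false_or_eq_true (b n k) with hb | hb <;>
        simp [ha, hb] at hne this <;>
        exact absurd this (not_le.mpr hCn)
end

section
/- The restriction of E_Σ to X₀ is Borel reducible to E_{ℓ∞}: there exists a Borel map f : X₀ → ℝ^ℕ such that for all a, b ∈ X₀, a E_Σ b if and only if sup_n |f(a)_n − f(b)_n| < ∞. -/
/-- The equivalence relation `E_Σ` on `(ℕ∞)^ℕ`: `a E_Σ b` iff there is `k` such that
for all `n, l`, `Σ_{i=n}^{n+l} a_i ≤ Σ_{j=max(0,n-k)}^{n+l+k} b_j` and symmetrically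
(`n - k` below is truncated subtraction on `ℕ`, i.e. `max (0, n-k)`). -/
def ESigma (a b : ℕ → ℕ∞) : Prop :=
  ∃ k : ℕ, ∀ n l : ℕ,
    (∑ i ∈ Finset.Icc n (n + l), a i) ≤ (∑ j ∈ Finset.Icc (n - k) (n + l + k), b j) ∧
    (∑ i ∈ Finset.Icc n (n + l), b i) ≤ (∑ j ∈ Finset.Icc (n - k) (n + l + k), a j)

/-- `X₀` is the set of sequences in `(ℕ∞)^ℕ` whose sum is infinite, where the sum in
`ℕ∞` is the supremum of the partial sums. -/
def X0 : Set (ℕ → ℕ∞) := {a | (⨆ m : ℕ, ∑ k ∈ Finset.range m, a k) = ⊤}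

/-- The set of radii `r` such that the interval `[n-r, n+r]` carries at least `v` units
of `a`-mass. -/
def RSet (a : ℕ → ℕ∞) (n v : ℕ) : Set ℕ :=
  {r | (v : ℕ∞) ≤ ∑ i ∈ Finset.Icc (n - r) (n + r), a i}

/-- The least radius `r` such that `[n-r, n+r]` carries at least `v` units of `a`-mass. -/
noncomputable def G (a : ℕ → ℕ∞) (n v : ℕ) : ℕ := sInf (RSet a n v)

lemma SSet_mono {a : ℕ → ℕ∞} {n v r r' : ℕ} (hrr : r ≤ r') (hr : r ∈ RSet a n v) :
    r' ∈ RSet a n v := by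
  have hr' : (v : ℕ∞) ≤ ∑ i ∈ Finset.Icc (n - r) (n + r), a i := hr
  show (v : ℕ∞) ≤ _
  refine le_trans hr' (Finset.sum_le_sum_of_subset ?_)
  exact Finset.Icc_subset_Icc (by omega) (by omega)

lemma SSet_nonempty {a : ℕ → ℕ∞} (ha : a ∈ X0) (n v : ℕ) : (RSet a n v).Nonempty := by
  have ha' : (⨆ m : ℕ, ∑ k ∈ Finset.range m, a k) = ⊤ := ha
  have hv : (v : ℕ∞) < ⨆ m : ℕ, ∑ k ∈ Finset.range m, a k := by
    rw [ha']; exact ENat.coe_lt_top v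
  obtain ⟨m, hm⟩ := lt_iSup_iff.mp hv
  refine ⟨n + m, ?_⟩
  have hsub : Finset.range m ⊆ Finset.Icc (n - (n + m)) (n + (n + m)) := by
    intro i hi
    simp only [Finset.mem_range] at hi
    simp only [Finset.mem_Icc]
    omega
  exact le_trans hm.le (Finset.sum_le_sum_of_subset hsub)

lemma G_mem {a : ℕ → ℕ∞} (ha : a ∈ X0) (n v : ℕ) : G a n v ∈ RSet a n v :=
  Nat.sInf_mem (SSet_nonempty ha n v)

lemma mem_of_G_le {a : ℕ → ℕ∞} (ha : a ∈ X0) {n v r : ℕ} (h : G a n v ≤ r) :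
    r ∈ RSet a n v :=
  SSet_mono h (G_mem ha n v)

/-- Forward direction (one half): a one-sided `E_Σ` domination gives a bound on `G`. -/
lemma G_le_of_dom {a b : ℕ → ℕ∞} (ha : a ∈ X0) {k : ℕ}
    (h : ∀ n l : ℕ, (∑ i ∈ Finset.Icc n (n + l), a i) ≤
        ∑ j ∈ Finset.Icc (n - k) (n + l + k), b j)
    (n v : ℕ) : G b n v ≤ G a n v + k := by
  set r := G a n v with hr
  have hmem : (v : ℕ∞) ≤ ∑ i ∈ Finset.Icc (n - r) (n + r), a i := G_mem ha n v
  have key := h (n - r) ((n + r) - (n - r))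
  have e1 : (n - r) + ((n + r) - (n - r)) = n + r := by omega
  rw [e1] at key
  have e2 : Finset.Icc ((n - r) - k) (n + r + k) = Finset.Icc (n - (r + k)) (n + (r + k)) := by
    congr 1 <;> omega
  rw [e2] at key
  exact Nat.sInf_le (le_trans hmem key)

lemma enat_le_of_forall_coe_le {x y : ℕ∞} (h : ∀ v : ℕ, (v : ℕ∞) ≤ x → (v : ℕ∞) ≤ y) :
    x ≤ y := by
  induction x using ENat.recTopCoe with
  | top =>
    refine top_le_iff.mpr ?_
    by_contra hy
    lift y to ℕ using hy
    have h1 := h (y + 1) le_top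
    have h2 : y + 1 ≤ y := by exact_mod_cast h1
    omega
  | coe m => exact h m le_rfl

/-- Backward direction (one half): a uniform bound on `G`-differences gives one-sided
`E_Σ` domination with window `k + 1`. -/
lemma dom_of_G_le {a b : ℕ → ℕ∞} (hb : b ∈ X0) {k : ℕ}
    (h : ∀ n v : ℕ, G b n v ≤ G a n v + k) (n l : ℕ) :
    (∑ i ∈ Finset.Icc n (n + l), a i) ≤
      ∑ j ∈ Finset.Icc (n - (k + 1)) (n + l + (k + 1)), b j := by
  apply enat_le_of_forall_coe_le
  intro v hv
  set r0 := (l + 1) / 2 with hr0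
  set c := n + r0 with hc
  have h1 : G a c v ≤ r0 := by
    apply Nat.sInf_le
    show (v : ℕ∞) ≤ _
    refine le_trans hv (Finset.sum_le_sum_of_subset ?_)
    exact Finset.Icc_subset_Icc (by omega) (by omega)
  have h2 : G b c v ≤ r0 + k := le_trans (h c v) (by omega)
  have h3 : (v : ℕ∞) ≤ ∑ j ∈ Finset.Icc (c - (r0 + k)) (c + (r0 + k)), b j :=
    mem_of_G_le hb h2
  refine le_trans h3 (Finset.sum_le_sum_of_subset ?_)
  exact Finset.Icc_subset_Icc (by omega) (by omega)

lemma sum_measurable (s : Finset ℕ) :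
    Measurable (fun a : X0 => ∑ i ∈ s, (a : ℕ → ℕ∞) i) :=
  Finset.measurable_sum s fun i _ => (measurable_pi_apply i).comp measurable_subtype_coe

lemma G_le_measurableSet (n v r : ℕ) :
    MeasurableSet {a : X0 | G (a : ℕ → ℕ∞) n v ≤ r} := by
  have heq : {a : X0 | G (a : ℕ → ℕ∞) n v ≤ r} =
      (fun a : X0 => ∑ i ∈ Finset.Icc (n - r) (n + r), (a : ℕ → ℕ∞) i) ⁻¹'
        {x | (v : ℕ∞) ≤ x} := by
    ext a
    simp only [Set.mem_setOf_eq, Set.mem_preimage]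
    exact ⟨fun hGr => mem_of_G_le a.2 hGr, fun hmem => Nat.sInf_le hmem⟩
  rw [heq]
  exact (sum_measurable _) MeasurableSet.of_discrete

lemma G_measurable (n v : ℕ) : Measurable fun a : X0 => G (a : ℕ → ℕ∞) n v := by
  apply measurable_to_countable'
  intro r
  have heq : (fun a : X0 => G (a : ℕ → ℕ∞) n v) ⁻¹' {r} =
      {a : X0 | G (a : ℕ → ℕ∞) n v ≤ r} \
        ⋃ (r' : ℕ) (_ : r' < r), {a : X0 | G (a : ℕ → ℕ∞) n v ≤ r'} := by
    ext a
    simp only [Set.mem_preimage, Set.mem_singleton_iff, Set.mem_diff, Set.mem_setOf_eq,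
      Set.mem_iUnion, not_exists]
    constructor
    · rintro rfl
      exact ⟨le_rfl, fun r' hr' h => by omega⟩
    · rintro ⟨h1, h2⟩
      by_contra hne
      exact h2 (G (a : ℕ → ℕ∞) n v) (by omega) le_rfl
  rw [heq]
  exact (G_le_measurableSet n v r).diff
    (MeasurableSet.iUnion fun r' => MeasurableSet.iUnion fun _ => G_le_measurableSet n v r')

/-- The restriction of `E_Σ` to `X₀` is Borel reducible to `E_{ℓ∞}`. -/
theorem ESigma_restricted_borel_reducible_to_ell_infty :
    ∃ f : X0 → (ℕ → ℝ), Measurable f ∧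
      ∀ a b : X0, ESigma (a : ℕ → ℕ∞) (b : ℕ → ℕ∞) ↔
        ∃ C : ℝ, ∀ n, |f a n - f b n| ≤ C := by
  refine ⟨fun a m => ((G (a : ℕ → ℕ∞) m.unpair.1 m.unpair.2 : ℕ) : ℝ), ?_, ?_⟩
  · exact measurable_pi_lambda _ fun m =>
      measurable_from_top.comp (G_measurable m.unpair.1 m.unpair.2)
  · intro a b
    constructor
    · rintro ⟨k, hk⟩
      refine ⟨(k : ℝ), fun m => ?_⟩
      set n := m.unpair.1
      set v := m.unpair.2
      have h1 : G (b : ℕ → ℕ∞) n v ≤ G (a : ℕ → ℕ∞) n v + k :=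
        G_le_of_dom a.2 (fun n l => (hk n l).1) n v
      have h2 : G (a : ℕ → ℕ∞) n v ≤ G (b : ℕ → ℕ∞) n v + k :=
        G_le_of_dom b.2 (fun n l => (hk n l).2) n v
      have h1' : (G (b : ℕ → ℕ∞) n v : ℝ) ≤ (G (a : ℕ → ℕ∞) n v : ℝ) + k := by
        exact_mod_cast h1
      have h2' : (G (a : ℕ → ℕ∞) n v : ℝ) ≤ (G (b : ℕ → ℕ∞) n v : ℝ) + k := by
        exact_mod_cast h2
      rw [abs_sub_le_iff]
      constructor <;> linarith
    · rintro ⟨C, hC⟩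
      set k := ⌈C⌉₊ with hkdef
      have hG : ∀ n v : ℕ, G (a : ℕ → ℕ∞) n v ≤ G (b : ℕ → ℕ∞) n v + k ∧
          G (b : ℕ → ℕ∞) n v ≤ G (a : ℕ → ℕ∞) n v + k := by
        intro n v
        have hC' := hC (Nat.pair n v)
        simp only [Nat.unpair_pair] at hC'
        rw [abs_sub_le_iff] at hC'
        have hCk : C ≤ (k : ℝ) := Nat.le_ceil C
        constructor
        · have : (G (a : ℕ → ℕ∞) n v : ℝ) ≤ (G (b : ℕ → ℕ∞) n v : ℝ) + k := by
            linarith [hC'.1]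
          exact_mod_cast this
        · have : (G (b : ℕ → ℕ∞) n v : ℝ) ≤ (G (a : ℕ → ℕ∞) n v : ℝ) + k := by
            linarith [hC'.2]
          exact_mod_cast this
      exact ⟨k + 1, fun n l =>
        ⟨dom_of_G_le b.2 (fun n v => (hG n v).2) n l,
         dom_of_G_le a.2 (fun n v => (hG n v).1) n l⟩⟩
end
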